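/- With the dual (tilde) operators of the Langlands-dual type-C₂ representation defined in the context, the C₂ quantum Serre relations hold for the dual e-generators, as identities of operators on the space of all functions ℂ⁴ → ℂ: ẽ₁²ẽ₂ − (q̃₁ + q̃₁⁻¹) ẽ₁ẽ₂ẽ₁ + ẽ₂ẽ₁² = 0 and ẽ₂³ẽ₁ − [3]_{q̃₂} ẽ₂²ẽ₁ẽ₂ + [3]_{q̃₂} ẽ₂ẽ₁ẽ₂² − ẽ₁ẽ₂³ = 0, where [3]_{q̃₂} = q̃₂² + 1 + q̃₂⁻². -/
import Mathlib


noncomputable section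

open Complex

/-- The space of operators on all functions `ℂ⁴ → ℂ`. -/
abbrev OpB : Type := Module.End ℂ ((Fin 4 → ℂ) → ℂ)

/-- Weyl operator `W(ℓ,δ)`: `(W(ℓ,δ) f)(x) = exp(ℓ(x + δ/2)) · f(x + δ)`. -/
def Wop (ℓ : (Fin 4 → ℂ) → ℂ) (δ : Fin 4 → ℂ) : OpB where
  toFun f := fun x => Complex.exp (ℓ (x + (2 : ℂ)⁻¹ • δ)) * f (x + δ)
  map_add' f g := by funext x; simp [mul_add]
  map_smul' c f := by funext x; simp [smul_eq_mul]; ring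

/-- `b_s = b/√2`. -/
def bs (b : ℝ) : ℝ := b / Real.sqrt 2

/-- `q = exp(π i b²)`. -/
def qq (b : ℝ) : ℂ := Complex.exp ((Real.pi : ℂ) * Complex.I * (b : ℂ) ^ 2)

/-- `q_s = exp(π i b_s²)`. -/
def qs (b : ℝ) : ℂ := Complex.exp ((Real.pi : ℂ) * Complex.I * ((bs b : ℝ) : ℂ) ^ 2)

/-- The affine functional `ℓ_α = π (b_s (ct·t + cv·v + cl1·λ₁) + b (cu·u + cw·w + cl2·λ₂))`,
where `(t,u,v,w) = (x 0, x 1, x 2, x 3)`. -/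
def ellB (b lam1 lam2 ct cu cv cw cl1 cl2 : ℝ) : (Fin 4 → ℂ) → ℂ := fun x =>
  (Real.pi : ℂ) * (((bs b : ℝ) : ℂ) * (ct * x 0 + cv * x 2 + cl1 * lam1)
    + (b : ℂ) * (cu * x 1 + cw * x 3 + cl2 * lam2))

/-- The shift vector `δ = (−i b_s d_t, −i b d_u, −i b_s d_v, −i b d_w)`. -/
def deltaB (b dt du dv dw : ℝ) : Fin 4 → ℂ :=
  ![-Complex.I * ((bs b : ℝ) : ℂ) * dt, -Complex.I * (b : ℂ) * du,
    -Complex.I * ((bs b : ℝ) : ℂ) * dv, -Complex.I * (b : ℂ) * dw]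

/-- The operator `[α]e(d_t p_t + d_u p_u + d_v p_v + d_w p_w) = W(ℓ_α,δ) + W(−ℓ_α,δ)`. -/
def brB (b lam1 lam2 ct cu cv cw cl1 cl2 dt du dv dw : ℝ) : OpB :=
  Wop (ellB b lam1 lam2 ct cu cv cw cl1 cl2) (deltaB b dt du dv dw)
    + Wop (fun x => -(ellB b lam1 lam2 ct cu cv cw cl1 cl2 x)) (deltaB b dt du dv dw)

/-- `K₁ = W(π(b_s(2λ₁−2t−2v) + b(u+w)), 0)`. -/
def K1 (b lam1 lam2 : ℝ) : OpB := Wop (ellB b lam1 lam2 (-2) 1 (-2) 1 2 0) 0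

/-- `K₁⁻¹`, the multiplication operator with negated exponent. -/
def K1inv (b lam1 lam2 : ℝ) : OpB := Wop (ellB b lam1 lam2 2 (-1) 2 (-1) (-2) 0) 0

/-- `K₂ = W(π(b(2λ₂−2u−2w) + b_s(2t+2v)), 0)`. -/
def K2 (b lam1 lam2 : ℝ) : OpB := Wop (ellB b lam1 lam2 2 (-2) 2 (-2) 0 2) 0

/-- `K₂⁻¹`, the multiplication operator with negated exponent. -/
def K2inv (b lam1 lam2 : ℝ) : OpB := Wop (ellB b lam1 lam2 (-2) 2 (-2) 2 0 (-2)) 0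

/-- `q̃₁ = exp(π i b_s⁻²)`. -/
def qt1 (b : ℝ) : ℂ := Complex.exp ((Real.pi : ℂ) * Complex.I * (((bs b)⁻¹ : ℝ) : ℂ) ^ 2)

/-- `q̃₂ = exp(π i b⁻²)`. -/
def qt2 (b : ℝ) : ℂ := Complex.exp ((Real.pi : ℂ) * Complex.I * ((b⁻¹ : ℝ) : ℂ) ^ 2)

/-- The affine functional
`ℓ̃_α = π (b_s⁻¹ (ct·t + cv·v + cl1·λ₁) + b⁻¹ (cu·u + cw·w + cl2·λ₂))`. -/
def ellBs (b lam1 lam2 ct cu cv cw cl1 cl2 : ℝ) : (Fin 4 → ℂ) → ℂ := fun x =>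
  (Real.pi : ℂ) * ((((bs b)⁻¹ : ℝ) : ℂ) * (ct * x 0 + cv * x 2 + cl1 * lam1)
    + ((b⁻¹ : ℝ) : ℂ) * (cu * x 1 + cw * x 3 + cl2 * lam2))

/-- The starred shift vector `δ̃ = (−i b_s⁻¹ d_t, −i b⁻¹ d_u, −i b_s⁻¹ d_v, −i b⁻¹ d_w)`. -/
def deltaBs (b dt du dv dw : ℝ) : Fin 4 → ℂ :=
  ![-Complex.I * (((bs b)⁻¹ : ℝ) : ℂ) * dt, -Complex.I * ((b⁻¹ : ℝ) : ℂ) * du,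
    -Complex.I * (((bs b)⁻¹ : ℝ) : ℂ) * dv, -Complex.I * ((b⁻¹ : ℝ) : ℂ) * dw]

/-- The starred operator `[α]_*e_*(·) = W(ℓ̃_α,δ̃) + W(−ℓ̃_α,δ̃)`. -/
def brBs (b lam1 lam2 ct cu cv cw cl1 cl2 dt du dv dw : ℝ) : OpB :=
  Wop (ellBs b lam1 lam2 ct cu cv cw cl1 cl2) (deltaBs b dt du dv dw)
    + Wop (fun x => -(ellBs b lam1 lam2 ct cu cv cw cl1 cl2 x)) (deltaBs b dt du dv dw)

/-- `ẽ₁ = [2u−v]_*e_*(2p_w−p_v−2p_u) + (q̃₂+q̃₂⁻¹)[u−w]_*e_*(p_w−p_v−p_u)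
  + [v−2w]_*e_*(−p_v) + [t]_*e_*(2p_w−2p_u−p_t)`. -/
def et1 (b lam1 lam2 : ℝ) : OpB :=
  brBs b lam1 lam2 0 2 (-1) 0 0 0 0 (-2) (-1) 2
    + (qt2 b + (qt2 b)⁻¹) • brBs b lam1 lam2 0 1 0 (-1) 0 0 0 (-1) (-1) 1
    + brBs b lam1 lam2 0 0 1 (-2) 0 0 0 0 (-1) 0
    + brBs b lam1 lam2 1 0 0 0 0 0 (-1) (-2) 0 2

/-- `ẽ₂ = [w]_*e_*(−p_w)`. -/
def et2 (b lam1 lam2 : ℝ) : OpB := brBs b lam1 lam2 0 0 0 1 0 0 0 0 0 (-1)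

/-- `f̃₁ = [2λ₁−t]_*e_*(p_t) + [2λ₁−2t+2u−v]_*e_*(p_v)`. -/
def ft1 (b lam1 lam2 : ℝ) : OpB :=
  brBs b lam1 lam2 (-1) 0 0 0 2 0 1 0 0 0
    + brBs b lam1 lam2 (-2) 2 (-1) 0 2 0 0 0 1 0

/-- `f̃₂ = [2λ₂+t−u]_*e_*(p_u) + [2λ₂+t−2u+v−w]_*e_*(p_w)`. -/
def ft2 (b lam1 lam2 : ℝ) : OpB :=
  brBs b lam1 lam2 1 (-1) 0 0 0 2 0 1 0 0
    + brBs b lam1 lam2 1 (-2) 1 (-1) 0 2 0 0 0 1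

/-- `K̃₁ = W(π(b_s⁻¹(2λ₁−2t−2v) + 2b⁻¹(u+w)), 0)`. -/
def Kt1 (b lam1 lam2 : ℝ) : OpB := Wop (ellBs b lam1 lam2 (-2) 2 (-2) 2 2 0) 0

/-- `K̃₁⁻¹`, the multiplication operator with negated exponent. -/
def Kt1inv (b lam1 lam2 : ℝ) : OpB := Wop (ellBs b lam1 lam2 2 (-2) 2 (-2) (-2) 0) 0

/-- `K̃₂ = W(π(b⁻¹(2λ₂−2u−2w) + b_s⁻¹(t+v)), 0)`. -/
def Kt2 (b lam1 lam2 : ℝ) : OpB := Wop (ellBs b lam1 lam2 1 (-2) 1 (-2) 0 2) 0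

/-- `K̃₂⁻¹`, the multiplication operator with negated exponent. -/
def Kt2inv (b lam1 lam2 : ℝ) : OpB := Wop (ellBs b lam1 lam2 (-1) 2 (-1) 2 0 (-2)) 0

open Complex in
lemma ellBs_neg (b l1 l2 ct cu cv cw cl1 cl2 : ℝ) :
    (fun x => -(ellBs b l1 l2 ct cu cv cw cl1 cl2 x))
      = ellBs b l1 l2 (-ct) (-cu) (-cv) (-cw) (-cl1) (-cl2) := by
  funext x; simp only [ellBs]; push_cast; ring

open Complex in
lemma hsq_lemma (b : ℝ) : (((bs b) : ℂ))⁻¹ ^ 2 = 2 * ((b:ℂ))⁻¹ ^ 2 := by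
  have h : ((bs b)⁻¹)^2 = 2 * ((b⁻¹ : ℝ))^2 := by
    rw [bs, inv_div, div_pow, Real.sq_sqrt (by norm_num : (0:ℝ) ≤ 2), inv_pow]; ring
  calc ((bs b : ℂ))⁻¹^2 = ((((bs b)⁻¹)^2 : ℝ) : ℂ) := by push_cast; ring
  _ = 2 * ((b:ℂ))⁻¹^2 := by rw [h]; push_cast; ring

open Complex in
lemma deltaBs_add (b d0 d1 d2 d3 f0 f1 f2 f3 : ℝ) :
    deltaBs b d0 d1 d2 d3 + deltaBs b f0 f1 f2 f3
      = deltaBs b (d0+f0) (d1+f1) (d2+f2) (d3+f3) := by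
  funext i
  fin_cases i <;> (simp [deltaBs]; push_cast; ring)

open Complex in
lemma Wop_mul_key (b l1 l2 : ℝ) (a0 a1 a2 a3 d0 d1 d2 d3 e0 e1 e2 e3 f0 f1 f2 f3 : ℝ) :
    Wop (ellBs b l1 l2 a0 a1 a2 a3 0 0) (deltaBs b d0 d1 d2 d3) *
      Wop (ellBs b l1 l2 e0 e1 e2 e3 0 0) (deltaBs b f0 f1 f2 f3) =
    Complex.exp ((((a0*f0 + a2*f2 - e0*d0 - e2*d2) + (a1*f1 + a3*f3 - e1*d1 - e3*d3)/2 : ℝ) : ℂ)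
        * ((Real.pi:ℂ) * Complex.I * ((b⁻¹:ℝ):ℂ)^2))
      • Wop (ellBs b l1 l2 (a0+e0) (a1+e1) (a2+e2) (a3+e3) 0 0)
        (deltaBs b (d0+f0) (d1+f1) (d2+f2) (d3+f3)) := by
  have hsq := hsq_lemma b
  apply LinearMap.ext; intro g
  funext x
  have harg : x + deltaBs b d0 d1 d2 d3 + deltaBs b f0 f1 f2 f3
      = x + deltaBs b (d0+f0) (d1+f1) (d2+f2) (d3+f3) := by
    rw [add_assoc, deltaBs_add]
  simp only [Module.End.mul_apply, LinearMap.smul_apply, Wop, LinearMap.coe_mk,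
    AddHom.coe_mk, Pi.smul_apply, smul_eq_mul]
  rw [harg, ← mul_assoc, ← Complex.exp_add, ← mul_assoc, ← Complex.exp_add]
  congr 2
  simp only [ellBs, deltaBs, Pi.add_apply, Pi.smul_apply, smul_eq_mul,
    Matrix.cons_val_zero, Matrix.cons_val_one, Matrix.head_cons,
    Matrix.cons_val_two, Matrix.tail_cons, Matrix.cons_val_three, Matrix.head_fin_const]
  push_cast
  linear_combination ((Real.pi : ℂ) * Complex.I / 2 *
    ((a0:ℂ)*f0 + (a2:ℂ)*f2 - (e0:ℂ)*d0 - (e2:ℂ)*d2)) * hsq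

set_option maxHeartbeats 4000000 in
/-- the C₂ quantum Serre relations for the dual `e`-generators. -/
theorem C2dual_Serre_e (b lam1 lam2 : ℝ) (hb0 : 0 < b) (hb1 : b < 1)
    (hirr : Irrational (b ^ 2)) :
    et1 b lam1 lam2 ^ 2 * et2 b lam1 lam2
      - (qt1 b + (qt1 b)⁻¹) • (et1 b lam1 lam2 * et2 b lam1 lam2 * et1 b lam1 lam2)
      + et2 b lam1 lam2 * et1 b lam1 lam2 ^ 2 = 0 ∧
    et2 b lam1 lam2 ^ 3 * et1 b lam1 lam2
      - ((qt2 b) ^ 2 + 1 + ((qt2 b)⁻¹) ^ 2) •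
          (et2 b lam1 lam2 ^ 2 * et1 b lam1 lam2 * et2 b lam1 lam2)
      + ((qt2 b) ^ 2 + 1 + ((qt2 b)⁻¹) ^ 2) •
          (et2 b lam1 lam2 * et1 b lam1 lam2 * et2 b lam1 lam2 ^ 2)
      - et1 b lam1 lam2 * et2 b lam1 lam2 ^ 3 = 0 := by
  have he2 : et2 b lam1 lam2
      = Wop (ellBs b lam1 lam2 0 0 0 1 0 0) (deltaBs b 0 0 0 (-1))
        + Wop (ellBs b lam1 lam2 0 0 0 (-1) 0 0) (deltaBs b 0 0 0 (-1)) := by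
    rw [et2, brBs, ellBs_neg]; norm_num
  have hq2 : qt2 b = Complex.exp ((Real.pi:ℂ) * Complex.I * ((b:ℂ)^2)⁻¹) := by
    rw [qt2]; norm_num
  have hq2i : (qt2 b)⁻¹
      = Complex.exp (-((Real.pi:ℂ) * Complex.I * ((b:ℂ)^2)⁻¹)) := by
    rw [hq2, ← Complex.exp_neg]
  have hq1 : qt1 b = Complex.exp ((2:ℂ) * ((Real.pi:ℂ) * Complex.I * ((b:ℂ)^2)⁻¹)) := by
    rw [qt1]; congr 1; push_cast; rw [hsq_lemma b]; ring
  have hq1i : (qt1 b)⁻¹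
      = Complex.exp (-((2:ℂ) * ((Real.pi:ℂ) * Complex.I * ((b:ℂ)^2)⁻¹))) := by
    rw [hq1, ← Complex.exp_neg]
  have he1 : et1 b lam1 lam2 =
      Wop (ellBs b lam1 lam2 0 2 (-1) 0 0 0) (deltaBs b 0 (-2) (-1) 2)
        + Wop (ellBs b lam1 lam2 0 (-2) 1 0 0 0) (deltaBs b 0 (-2) (-1) 2)
      + (Complex.exp ((Real.pi:ℂ) * Complex.I * ((b:ℂ)^2)⁻¹)
          + Complex.exp (-((Real.pi:ℂ) * Complex.I * ((b:ℂ)^2)⁻¹))) • (Wop (ellBs b lam1 lam2 0 1 0 (-1) 0 0) (deltaBs b 0 (-1) (-1) 1)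
          + Wop (ellBs b lam1 lam2 0 (-1) 0 1 0 0) (deltaBs b 0 (-1) (-1) 1))
      + (Wop (ellBs b lam1 lam2 0 0 1 (-2) 0 0) (deltaBs b 0 0 (-1) 0)
          + Wop (ellBs b lam1 lam2 0 0 (-1) 2 0 0) (deltaBs b 0 0 (-1) 0))
      + (Wop (ellBs b lam1 lam2 1 0 0 0 0 0) (deltaBs b (-1) (-2) 0 2)
          + Wop (ellBs b lam1 lam2 (-1) 0 0 0 0 0) (deltaBs b (-1) (-2) 0 2)) := by
    rw [et1, brBs, brBs, brBs, brBs, ellBs_neg, ellBs_neg, ellBs_neg, ellBs_neg, hq2i, hq2]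
    norm_num
  constructor
  · simp only [hq1i, hq2i]
    simp only [hq1, hq2]
    simp only [he1, he2, pow_two, sub_eq_add_neg, mul_add, add_mul,
      smul_add, add_smul, smul_smul, smul_mul_assoc, mul_smul_comm, neg_smul, neg_add,
      neg_mul, mul_neg, neg_neg, Wop_mul_key b lam1 lam2, ← Complex.exp_add]
    norm_num
    ring_nf
    simp only [Complex.exp_zero]
    match_scalars <;> ring
  · simp only [hq1i, hq2i]
    simp only [hq1, hq2]
    simp only [he1, he2, pow_succ, pow_two, pow_zero, one_mul, sub_eq_add_neg,
      mul_add, add_mul,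
      smul_add, add_smul, smul_smul, smul_mul_assoc, mul_smul_comm, neg_smul, neg_add,
      neg_mul, mul_neg, neg_neg, Wop_mul_key b lam1 lam2, ← Complex.exp_add]
    norm_num
    ring_nf
    simp only [Complex.exp_zero]
    match_scalars <;> ring

end
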